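/- Distinct swap permutations for the same string X yield distinct swapped versions: if π and σ are swap permutations for X with π(X) = σ(X), then π = σ. -/
import Mathlib


/-- Distinct swap permutations for the same string yield distinct swapped versions. -/
theorem swap_perm_injective_on_swapped {α : Type*} (n : ℕ) (X : Fin n → α)
    (π σ : Equiv.Perm (Fin n))
    (hπ1 : ∀ i : Fin n, π (π i) = i)
    (hπ2 : ∀ i : Fin n, (π i : ℕ) = (i : ℕ) - 1 ∨ (π i : ℕ) = (i : ℕ) ∨ (π i : ℕ) = (i : ℕ) + 1)
    (hπ3 : ∀ i : Fin n, π i ≠ i → X (π i) ≠ X i)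
    (hσ1 : ∀ i : Fin n, σ (σ i) = i)
    (hσ2 : ∀ i : Fin n, (σ i : ℕ) = (i : ℕ) - 1 ∨ (σ i : ℕ) = (i : ℕ) ∨ (σ i : ℕ) = (i : ℕ) + 1)
    (hσ3 : ∀ i : Fin n, σ i ≠ i → X (σ i) ≠ X i)
    (heq : ∀ i : Fin n, X (π i) = X (σ i)) :
    π = σ := by
  have key : ∀ m : ℕ, ∀ i : Fin n, (i : ℕ) = m → π i = σ i := by
    intro m
    induction m using Nat.strong_induction_on with
    | _ m IH =>
    intro i hi
    by_contra hne
    have hval : (π i : ℕ) ≠ (σ i : ℕ) := fun h => hne (Fin.ext h)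
    rcases hπ2 i with h1 | h1 | h1 <;> rcases hσ2 i with h2 | h2 | h2
    all_goals try (exact hval (h1.trans h2.symm))
    -- case π i = i-1, σ i = i
    · have hσi : σ i = i := Fin.ext h2
      have hne' : π i ≠ i := by intro h; rw [h] at h1; omega
      exact hπ3 i hne' (by rw [heq i, hσi])
    -- case π i = i-1, σ i = i+1
    · by_cases h0 : (i : ℕ) = 0
      · have hπi : π i = i := Fin.ext (by omega)
        have hne' : σ i ≠ i := by intro h; rw [h] at h2; omega
        exact hσ3 i hne' (by rw [← heq i, hπi])
      · have hIH := IH (π i : ℕ) (by omega) (π i) rfl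
        have h3 : σ (π i) = i := by rw [← hIH, hπ1]
        have h4 := congrArg σ h3
        rw [hσ1] at h4
        rw [← h4] at h2; omega
    -- case π i = i, σ i = i-1
    · have hπi : π i = i := Fin.ext h1
      have hne' : σ i ≠ i := by intro h; rw [h] at h2; omega
      exact hσ3 i hne' (by rw [← heq i, hπi])
    -- case π i = i, σ i = i+1
    · have hπi : π i = i := Fin.ext h1
      have hne' : σ i ≠ i := by intro h; rw [h] at h2; omega
      exact hσ3 i hne' (by rw [← heq i, hπi])
    -- case π i = i+1, σ i = i-1
    · by_cases h0 : (i : ℕ) = 0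
      · have hσi : σ i = i := Fin.ext (by omega)
        have hne' : π i ≠ i := by intro h; rw [h] at h1; omega
        exact hπ3 i hne' (by rw [heq i, hσi])
      · have hIH := IH (σ i : ℕ) (by omega) (σ i) rfl
        have h3 : π (σ i) = i := by rw [hIH, hσ1]
        have h4 := congrArg π h3
        rw [hπ1] at h4
        rw [← h4] at h1; omega
    -- case π i = i+1, σ i = i
    · have hσi : σ i = i := Fin.ext h2
      have hne' : π i ≠ i := by intro h; rw [h] at h1; omega
      exact hπ3 i hne' (by rw [heq i, hσi])
  exact Equiv.ext fun i => key (i : ℕ) i rfl
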